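/- Let ℓ be a prime, r ≥ 1, and Π a closed subgroup of GL_r(ℤ_ℓ). Let (C[n])_{n ≥ 0} be a compatible sequence with C[0] = Π, C[n] ∈ 𝒞_n(Π) for all n ≥ 1, and C[n] = C[n+1]·Φ(Π(n-1)) for all n ≥ 1. Then C[∞] := ⋂_{n ≥ 0} C[n] is a closed subgroup of Π which is not open in Π. -/
import Mathlib

open Matrix

/-- Reduction modulo `ℓ ^ n` on `GL_r(ℤ_ℓ)`. -/
noncomputable def glRed (l : ℕ) [Fact (Nat.Prime l)] (r n : ℕ) :
    GL (Fin r) ℤ_[l] →* GL (Fin r) (ZMod (l ^ n)) :=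
  Matrix.GeneralLinearGroup.map (PadicInt.toZModPow n)

/-- `Π(n)`: the kernel of reduction modulo `ℓ ^ n` restricted to the closed subgroup `Π`,
viewed as a subgroup of `Π`. -/
noncomputable def levelSubgroup (l : ℕ) [Fact (Nat.Prime l)] (r : ℕ)
    (P : Subgroup (GL (Fin r) ℤ_[l])) (n : ℕ) : Subgroup ↥P :=
  ((glRed l r n).comp P.subtype).ker

/-- A maximal proper open subgroup of a topological group. -/
def IsMaximalOpenSubgroup {G : Type*} [Group G] [TopologicalSpace G] (U : Subgroup G) : Prop :=
  IsOpen (U : Set G) ∧ U ≠ ⊤ ∧ ∀ V : Subgroup G, IsOpen (V : Set G) → U < V → V = ⊤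

/-- The Frattini subgroup of a topological group: the intersection of all maximal proper
open subgroups. -/
def frattiniOpen (G : Type*) [Group G] [TopologicalSpace G] : Subgroup G :=
  sInf {U : Subgroup G | IsMaximalOpenSubgroup U}

/-- The Frattini subgroup of a subgroup `K`, viewed as a subgroup of the ambient group. -/
def frattiniOf {G : Type*} [Group G] [TopologicalSpace G] (K : Subgroup G) : Subgroup G :=
  (frattiniOpen ↥K).map K.subtype

/-- `𝒞_n(Π)`: the set of open subgroups `U ⊆ Π` with `Φ(Π(n-1)) ⊆ U` but `Π(n-1) ⊄ U`. -/
noncomputable def Cn (l : ℕ) [Fact (Nat.Prime l)] (r : ℕ)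
    (P : Subgroup (GL (Fin r) ℤ_[l])) (n : ℕ) : Set (Subgroup ↥P) :=
  {U | IsOpen (U : Set ↥P) ∧ frattiniOf (levelSubgroup l r P (n - 1)) ≤ U ∧
    ¬ levelSubgroup l r P (n - 1) ≤ U}

section UnitsCompact

variable {M : Type*} [Monoid M] [TopologicalSpace M] [ContinuousMul M] [T1Space M]

lemma isClosed_range_embedProduct :
    IsClosed (Set.range (Units.embedProduct M)) := by
  have h : Set.range (Units.embedProduct M) =
      {p : M × Mᵐᵒᵖ | p.1 * p.2.unop = 1} ∩ {p : M × Mᵐᵒᵖ | p.2.unop * p.1 = 1} := by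
    ext ⟨a, b⟩
    constructor
    · rintro ⟨u, hu⟩
      simp only [Units.embedProduct, MonoidHom.coe_mk, OneHom.coe_mk, Prod.mk.injEq] at hu
      obtain ⟨h1, h2⟩ := hu
      subst h1; subst h2
      simp
    · rintro ⟨h1, h2⟩
      exact ⟨⟨a, b.unop, h1, h2⟩, by simp [Units.embedProduct]⟩
  rw [h]
  have c1 : Continuous fun p : M × Mᵐᵒᵖ => p.1 * p.2.unop :=
    continuous_fst.mul (MulOpposite.continuous_unop.comp continuous_snd)
  have c2 : Continuous fun p : M × Mᵐᵒᵖ => p.2.unop * p.1 :=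
    (MulOpposite.continuous_unop.comp continuous_snd).mul continuous_fst
  exact ((isClosed_singleton.preimage c1)).inter (isClosed_singleton.preimage c2)

lemma units_compactSpace [CompactSpace M] : CompactSpace Mˣ := by
  have : CompactSpace Mᵐᵒᵖ := MulOpposite.opHomeomorph.compactSpace
  exact Topology.IsClosedEmbedding.compactSpace
    ⟨Units.isEmbedding_embedProduct, isClosed_range_embedProduct⟩

end UnitsCompact

lemma continuous_toZModPow (p : ℕ) [Fact p.Prime] (n : ℕ) :
    Continuous (PadicInt.toZModPow (p := p) n) := by
  refine continuous_iff_continuousAt.2 fun x => Filter.Tendsto.mono_right ?_ (pure_le_nhds _)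
  have hp : (1 : ℕ) < p := (Fact.out : p.Prime).one_lt
  rw [Filter.tendsto_pure]
  have hball : Metric.ball x ((p : ℝ) ^ (-(n : ℤ) + 1)) ∈ nhds x :=
    Metric.ball_mem_nhds x (by positivity)
  refine Filter.mem_of_superset hball fun y hy => ?_
  have h1 : ‖y - x‖ < (p : ℝ) ^ (-(n : ℤ) + 1) := by
    rw [Metric.mem_ball, dist_eq_norm] at hy; exact hy
  have h2 : ‖y - x‖ ≤ (p : ℝ) ^ (-(n : ℤ)) :=
    (PadicInt.norm_le_pow_iff_norm_lt_pow_add_one _ _).2 h1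
  have h3 : y - x ∈ Ideal.span {(p : ℤ_[p]) ^ n} :=
    (PadicInt.norm_le_pow_iff_mem_span_pow _ _).1 h2
  rw [← PadicInt.ker_toZModPow, RingHom.mem_ker, map_sub, sub_eq_zero] at h3
  exact h3

section Level

variable (l : ℕ) [Fact (Nat.Prime l)] (r : ℕ) (P : Subgroup (GL (Fin r) ℤ_[l]))

lemma mem_levelSubgroup_iff (n : ℕ) (x : ↥P) :
    x ∈ levelSubgroup l r P n ↔ ∀ i j,
      PadicInt.toZModPow n (((x : GL (Fin r) ℤ_[l]) : Matrix (Fin r) (Fin r) ℤ_[l]) i j) =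
      PadicInt.toZModPow n ((1 : Matrix (Fin r) (Fin r) ℤ_[l]) i j) := by
  have hone : ((1 : Matrix (Fin r) (Fin r) ℤ_[l]).map (PadicInt.toZModPow (p := l) n)) = 1 :=
    Matrix.map_one _ (map_zero _) (map_one _)
  rw [levelSubgroup, MonoidHom.mem_ker, MonoidHom.comp_apply, Units.ext_iff]
  show (((x : GL (Fin r) ℤ_[l]) : Matrix (Fin r) (Fin r) ℤ_[l]).map (PadicInt.toZModPow n)
      = (1 : Matrix (Fin r) (Fin r) (ZMod (l ^ n)))) ↔ _
  rw [← hone, ← Matrix.ext_iff]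
  simp [Matrix.map_apply]

lemma levelSubgroup_antitone : Antitone (levelSubgroup l r P) := by
  intro m n h x hx
  rw [mem_levelSubgroup_iff] at hx ⊢
  intro i j
  have e : ∀ a : ℤ_[l], PadicInt.toZModPow m a =
      ZMod.castHom (pow_dvd_pow l h) (ZMod (l ^ m)) (PadicInt.toZModPow n a) :=
    fun a => (DFunLike.congr_fun (PadicInt.zmod_cast_comp_toZModPow m n h) a).symm
  rw [e, e, hx i j]

lemma eq_one_of_mem_all_levels (x : ↥P) (hx : ∀ n, x ∈ levelSubgroup l r P n) : x = 1 := by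
  have hmat : ((x : GL (Fin r) ℤ_[l]) : Matrix (Fin r) (Fin r) ℤ_[l]) = 1 := by
    ext i j
    rw [← PadicInt.ext_of_toZModPow]
    intro n
    exact (mem_levelSubgroup_iff l r P n x).1 (hx n) i j
  have hgl : (x : GL (Fin r) ℤ_[l]) = 1 := Units.ext hmat
  exact OneMemClass.coe_eq_one.1 hgl

lemma continuous_glRed (n : ℕ) : Continuous (glRed l r n) := by
  rw [Units.continuous_iff]
  constructor
  · show Continuous fun A : GL (Fin r) ℤ_[l] =>
      ((A : Matrix (Fin r) (Fin r) ℤ_[l]).map (PadicInt.toZModPow n))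
    exact Units.continuous_val.matrix_map (continuous_toZModPow l n)
  · show Continuous fun A : GL (Fin r) ℤ_[l] =>
      (((A⁻¹ : GL (Fin r) ℤ_[l]) : Matrix (Fin r) (Fin r) ℤ_[l]).map (PadicInt.toZModPow n))
    exact Units.continuous_coe_inv.matrix_map (continuous_toZModPow l n)

lemma isClosed_levelSubgroup (n : ℕ) : IsClosed ((levelSubgroup l r P n : Set ↥P)) := by
  have h : (levelSubgroup l r P n : Set ↥P) = ((glRed l r n).comp P.subtype) ⁻¹' {1} := by
    ext x
    simp [levelSubgroup, MonoidHom.mem_ker]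
  rw [h]
  exact isClosed_singleton.preimage ((continuous_glRed l r n).comp continuous_subtype_val)

end Level

open Pointwise in
/-- If `(C[n])` is a compatible sequence with `C[0] = Π`, `C[n] ∈ 𝒞_n(Π)` and
`C[n] = C[n+1]·Φ(Π(n-1))` for `n ≥ 1`, then `C[∞] = ⋂ C[n]` is a closed but not open
subgroup of `Π`. -/
theorem iInf_of_compatible_sequence_closed_not_open (l : ℕ) [Fact (Nat.Prime l)] (r : ℕ)
    (P : Subgroup (GL (Fin r) ℤ_[l])) (hP : IsClosed (P : Set (GL (Fin r) ℤ_[l])))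
    (C : ℕ → Subgroup ↥P) (hC0 : C 0 = ⊤) (hCmem : ∀ n : ℕ, 1 ≤ n → C n ∈ Cn l r P n)
    (hCcompat : ∀ n : ℕ, 1 ≤ n →
      (C n : Set ↥P) = (C (n + 1) : Set ↥P) * (frattiniOf (levelSubgroup l r P (n - 1)) : Set ↥P)) :
    IsClosed ((⨅ n : ℕ, C n : Subgroup ↥P) : Set ↥P) ∧
      ¬ IsOpen ((⨅ n : ℕ, C n : Subgroup ↥P) : Set ↥P) := by
  classical
  haveI : CompactSpace (Matrix (Fin r) (Fin r) ℤ_[l]) :=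
    (inferInstance : CompactSpace (Fin r → Fin r → ℤ_[l]))
  haveI : CompactSpace (GL (Fin r) ℤ_[l]) := units_compactSpace
  haveI : CompactSpace ↥P := isCompact_iff_compactSpace.1 hP.isCompact
  set S : Subgroup ↥P := ⨅ n : ℕ, C n with hS
  have hSet : (S : Set ↥P) = ⋂ n, (C n : Set ↥P) := by
    rw [hS, Subgroup.coe_iInf]
  constructor
  · rw [hSet]
    refine isClosed_iInter fun n => ?_
    rcases Nat.eq_zero_or_pos n with h0 | h1
    · subst h0; rw [hC0]; simp
    · exact Subgroup.isClosed_of_isOpen _ (hCmem n h1).1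
  · intro hopen
    obtain ⟨N, hN⟩ : ∃ N, (levelSubgroup l r P N : Set ↥P) ⊆ (S : Set ↥P) := by
      have hKcl : ∀ n, IsClosed (levelSubgroup l r P n : Set ↥P) := isClosed_levelSubgroup l r P
      have hcov : (S : Set ↥P)ᶜ ⊆ ⋃ n, (levelSubgroup l r P n : Set ↥P)ᶜ := by
        intro x hx
        by_contra hc
        simp only [Set.mem_iUnion, Set.mem_compl_iff, not_exists, not_not] at hc
        refine hx ?_
        have hx1 := eq_one_of_mem_all_levels l r P x hc
        rw [hx1]
        exact S.one_mem
      have hcpt : IsCompact ((S : Set ↥P)ᶜ) := hopen.isClosed_compl.isCompact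
      obtain ⟨t, ht⟩ := hcpt.elim_finite_subcover _ (fun n => (hKcl n).isOpen_compl) hcov
      refine ⟨t.sup id, fun x hx => ?_⟩
      by_contra hxS
      obtain ⟨n, hnt, hn⟩ := Set.mem_iUnion₂.1 (ht hxS)
      exact hn (levelSubgroup_antitone l r P (Finset.le_sup (f := id) hnt) hx)
    have hle : levelSubgroup l r P N ≤ C (N + 1) := by
      intro x hx
      have hxS : x ∈ S := hN hx
      exact (iInf_le C (N + 1)) hxS
    have hnot := (hCmem (N + 1) (by omega)).2.2
    simp only [Nat.add_sub_cancel] at hnot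
    exact hnot hle
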